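/- arXiv:1102.5774 — 2 statements merged into one kernel-verified Lean document; each statement's English description precedes it below -/
import Mathlib

section
/- Let u₀, v₀ : ℝⁿ → ℝ be bounded by R with modulus of continuity σ for v₀. If (x̂, ŷ) maximizes φ(x,y) = u₀(x) − v₀(y) − (α/2)|x−y|² − ε(|x|²+|y|²) with maximum value M_{α,ε} ≥ 0, then M_{α,ε} ≤ sup_x[u₀(x) − v₀(x)] + σ(√(4R/α)). -/
open Set

/-- With `|u₀|,|v₀| ≤ R` and `σ` a nondecreasing modulus of continuity
for `v₀`, any maximizer `(x̂,ŷ)` of the penalized functional with nonnegative maximum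
value `M_{α,ε}` satisfies `M_{α,ε} ≤ sup_x (u₀ x - v₀ x) + σ(√(4R/α))`. -/
theorem stmt2 (n : ℕ) (u₀ v₀ : EuclideanSpace ℝ (Fin n) → ℝ) (R : ℝ)
    (hub : ∀ x, |u₀ x| ≤ R) (hvb : ∀ x, |v₀ x| ≤ R)
    (σ : ℝ → ℝ) (hσmod : ∀ x y : EuclideanSpace ℝ (Fin n), |v₀ x - v₀ y| ≤ σ ‖x - y‖)
    (hσmono : Monotone σ)
    (α ε : ℝ) (hα : 0 < α) (hε : 0 < ε)
    (xh yh : EuclideanSpace ℝ (Fin n))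
    (hmax : ∀ x y : EuclideanSpace ℝ (Fin n),
      u₀ x - v₀ y - α / 2 * ‖x - y‖ ^ 2 - ε * (‖x‖ ^ 2 + ‖y‖ ^ 2)
        ≤ u₀ xh - v₀ yh - α / 2 * ‖xh - yh‖ ^ 2 - ε * (‖xh‖ ^ 2 + ‖yh‖ ^ 2))
    (hMnonneg : 0 ≤ u₀ xh - v₀ yh - α / 2 * ‖xh - yh‖ ^ 2 - ε * (‖xh‖ ^ 2 + ‖yh‖ ^ 2)) :
    u₀ xh - v₀ yh - α / 2 * ‖xh - yh‖ ^ 2 - ε * (‖xh‖ ^ 2 + ‖yh‖ ^ 2)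
      ≤ sSup (Set.range (fun x => u₀ x - v₀ x)) + σ (Real.sqrt (4 * R / α)) := by
  have hεterm : 0 ≤ ε * (‖xh‖ ^ 2 + ‖yh‖ ^ 2) := by positivity
  have h2R : u₀ xh - v₀ yh ≤ 2 * R := by
    have h1 := (abs_le.mp (hub xh)).2
    have h2 := (abs_le.mp (hvb yh)).1
    linarith
  have hsq : ‖xh - yh‖ ^ 2 ≤ 4 * R / α := by
    rw [le_div_iff₀ hα]
    nlinarith
  have hnorm : ‖xh - yh‖ ≤ Real.sqrt (4 * R / α) := by
    have := Real.sqrt_le_sqrt hsq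
    rwa [Real.sqrt_sq (norm_nonneg _)] at this
  have hσle : v₀ xh - v₀ yh ≤ σ (Real.sqrt (4 * R / α)) :=
    le_trans (le_trans (le_abs_self _) (hσmod xh yh)) (hσmono hnorm)
  have hbdd : BddAbove (Set.range (fun x => u₀ x - v₀ x)) := by
    refine ⟨2 * R, ?_⟩
    rintro _ ⟨x, rfl⟩
    have h1 := (abs_le.mp (hub x)).2
    have h2 := (abs_le.mp (hvb x)).1
    simp only
    linarith
  have hsup : u₀ xh - v₀ xh ≤ sSup (Set.range (fun x => u₀ x - v₀ x)) :=
    le_csSup hbdd ⟨xh, rfl⟩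
  nlinarith [sq_nonneg ‖xh - yh‖]
end

section
/- With notation as in the doubling-variables lemma: M' := lim_{h→0} sup{u(t,x)−v(t,y) : t∈[0,T], |x−y|≤h} satisfies M' ≤ liminf_{α→∞} liminf_{ε→0} M_{α,ε}, where M_{α,ε} is the maximum of φ(t,x,y) = u(t,x) − v(t,y) − (α/2)|x−y|² − ε(|x|²+|y|²). -/
open Set Filter

/-- With `u` bounded USC, `v` bounded LSC on `[0,T]×ℝⁿ`,
`M' = lim_{h→0} M(h)` (with `M(h) = sup{u(t,x)-v(t,y) : t ∈ [0,T], |x-y| ≤ h}`)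
satisfies `M' ≤ liminf_{α→∞} liminf_{ε→0} M_{α,ε}`, where `M_{α,ε}` is the maximum
of the penalized functional `φ`. -/
theorem stmt6 (n : ℕ) (T : ℝ) (hT : 0 ≤ T)
    (u v : ℝ × EuclideanSpace ℝ (Fin n) → ℝ) (Bu Bv : ℝ)
    (hub : ∀ p, |u p| ≤ Bu) (hvb : ∀ p, |v p| ≤ Bv)
    (husc : UpperSemicontinuousOn u (Set.Icc 0 T ×ˢ Set.univ))
    (hlsc : LowerSemicontinuousOn v (Set.Icc 0 T ×ˢ Set.univ))
    (th : ℝ → ℝ → ℝ) (xh yh : ℝ → ℝ → EuclideanSpace ℝ (Fin n))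
    (hth : ∀ α ε : ℝ, 0 < α → 0 < ε → th α ε ∈ Set.Icc 0 T)
    (Mae : ℝ → ℝ → ℝ)
    (hMae : ∀ α ε : ℝ, 0 < α → 0 < ε →
      Mae α ε = u (th α ε, xh α ε) - v (th α ε, yh α ε) - α / 2 * ‖xh α ε - yh α ε‖ ^ 2
        - ε * (‖xh α ε‖ ^ 2 + ‖yh α ε‖ ^ 2))
    (hmax : ∀ α ε : ℝ, 0 < α → 0 < ε → ∀ t ∈ Set.Icc 0 T,
      ∀ x y : EuclideanSpace ℝ (Fin n),
      u (t, x) - v (t, y) - α / 2 * ‖x - y‖ ^ 2 - ε * (‖x‖ ^ 2 + ‖y‖ ^ 2) ≤ Mae α ε)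
    (M : ℝ → ℝ)
    (hMdef : ∀ h : ℝ, M h = sSup {r : ℝ | ∃ t ∈ Set.Icc 0 T,
      ∃ x y : EuclideanSpace ℝ (Fin n), ‖x - y‖ ≤ h ∧ r = u (t, x) - v (t, y)})
    (M' : ℝ) (hM' : Tendsto M (nhdsWithin 0 (Set.Ioi 0)) (nhds M')) :
    M' ≤ liminf (fun α => liminf (fun ε => Mae α ε) (nhdsWithin 0 (Set.Ioi 0))) atTop := by
  -- Lower and upper bounds on `Mae`.
  have hlow : ∀ α ε : ℝ, 0 < α → 0 < ε → -(Bu + Bv) ≤ Mae α ε := by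
    intro α ε hα hε
    have h0 : (0:ℝ) ∈ Set.Icc 0 T := ⟨le_refl _, hT⟩
    have hkey := hmax α ε hα hε 0 h0 0 0
    have hu0 := abs_le.1 (hub (0, 0))
    have hv0 := abs_le.1 (hvb (0, 0))
    simp only [sub_zero, norm_zero] at hkey
    nlinarith [hkey]
  have hup : ∀ α ε : ℝ, 0 < α → 0 < ε → Mae α ε ≤ Bu + Bv := by
    intro α ε hα hε
    rw [hMae α ε hα hε]
    have hu0 := abs_le.1 (hub (th α ε, xh α ε))
    have hv0 := abs_le.1 (hvb (th α ε, yh α ε))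
    have p1 : 0 ≤ α / 2 * ‖xh α ε - yh α ε‖ ^ 2 := by positivity
    have p2 : 0 ≤ ε * (‖xh α ε‖ ^ 2 + ‖yh α ε‖ ^ 2) := by positivity
    linarith
  have hbdMae : ∀ α : ℝ, 0 < α →
      IsBoundedUnder (· ≥ ·) (nhdsWithin (0:ℝ) (Set.Ioi 0)) (fun ε => Mae α ε) := by
    intro α hα
    refine ⟨-(Bu + Bv), ?_⟩
    rw [Filter.eventually_map]
    filter_upwards [self_mem_nhdsWithin] with ε hε
    exact hlow α ε hα hε
  -- inner bound: for every δ > 0 and α > 0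
  have inner : ∀ δ : ℝ, 0 < δ → ∀ α : ℝ, 0 < α →
      M' - 2*δ ≤ liminf (fun ε => Mae α ε) (nhdsWithin 0 (Set.Ioi 0)) := by
    intro δ hδ α hα
    have h1 : ∀ᶠ h in nhdsWithin (0:ℝ) (Set.Ioi 0), M' - δ < M h :=
      hM'.eventually (eventually_gt_nhds (by linarith))
    have h2 : ∀ᶠ h in nhdsWithin (0:ℝ) (Set.Ioi 0), h < min 1 (2*δ/α) :=
      Filter.Eventually.filter_mono nhdsWithin_le_nhds
        (eventually_lt_nhds (by positivity))
    have h3 : ∀ᶠ h in nhdsWithin (0:ℝ) (Set.Ioi 0), 0 < h := self_mem_nhdsWithin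
    obtain ⟨h, hMh, hhlt, hhpos⟩ := (h1.and (h2.and h3)).exists
    -- extract a near-optimal point from the sup defining M h
    have hne : {r : ℝ | ∃ t ∈ Set.Icc 0 T,
        ∃ x y : EuclideanSpace ℝ (Fin n), ‖x - y‖ ≤ h ∧ r = u (t, x) - v (t, y)}.Nonempty := by
      refine ⟨u (0, 0) - v (0, 0), 0, ⟨le_refl _, hT⟩, 0, 0, ?_, rfl⟩
      simp [hhpos.le]
    have hlt : M' - δ < sSup {r : ℝ | ∃ t ∈ Set.Icc 0 T,
        ∃ x y : EuclideanSpace ℝ (Fin n), ‖x - y‖ ≤ h ∧ r = u (t, x) - v (t, y)} := by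
      rw [← hMdef h]; exact hMh
    obtain ⟨r, hrmem, hrgt⟩ := exists_lt_of_lt_csSup hne hlt
    obtain ⟨t, ht, x, y, hxy, rfl⟩ := hrmem
    -- pointwise bound for ε > 0
    have hb : ∀ ε : ℝ, 0 < ε →
        M' - 2*δ - ε * (‖x‖ ^ 2 + ‖y‖ ^ 2) ≤ Mae α ε := by
      intro ε hε
      have hkey := hmax α ε hα hε t ht x y
      have hh1 : h < 1 := lt_of_lt_of_le hhlt (min_le_left _ _)
      have hh2 : h < 2*δ/α := lt_of_lt_of_le hhlt (min_le_right _ _)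
      have hh2' : α * h < 2*δ := by
        rw [lt_div_iff₀ hα] at hh2; nlinarith
      have hsq : ‖x - y‖ ^ 2 ≤ h := by nlinarith [norm_nonneg (x - y)]
      have hpen : α / 2 * ‖x - y‖ ^ 2 ≤ δ := by nlinarith [norm_nonneg (x - y)]
      linarith
    -- pass to the liminf
    have tlim : Tendsto (fun ε : ℝ => M' - 2*δ - ε * (‖x‖ ^ 2 + ‖y‖ ^ 2))
        (nhdsWithin (0:ℝ) (Set.Ioi 0)) (nhds (M' - 2*δ)) := by
      have hc : Continuous (fun ε : ℝ => M' - 2*δ - ε * (‖x‖ ^ 2 + ‖y‖ ^ 2)) :=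
        continuous_const.sub (continuous_id.mul continuous_const)
      have := (hc.tendsto 0).mono_left (nhdsWithin_le_nhds
        (s := Set.Ioi (0:ℝ)))
      simpa using this
    have hcoMae : IsCoboundedUnder (· ≥ ·) (nhdsWithin (0:ℝ) (Set.Ioi 0))
        (fun ε => Mae α ε) := by
      refine Filter.IsBoundedUnder.isCoboundedUnder_ge ⟨Bu + Bv, ?_⟩
      rw [Filter.eventually_map]
      filter_upwards [self_mem_nhdsWithin] with ε hε
      exact hup α ε hα hε
    have hle := Filter.liminf_le_liminf
      (f := nhdsWithin (0:ℝ) (Set.Ioi 0))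
      (u := fun ε : ℝ => M' - 2*δ - ε * (‖x‖ ^ 2 + ‖y‖ ^ 2))
      (v := fun ε => Mae α ε)
      (by filter_upwards [self_mem_nhdsWithin] with ε hε using hb ε hε)
      tlim.isBoundedUnder_ge hcoMae
    rwa [tlim.liminf_eq] at hle
  -- outer step
  have hFle : ∀ᶠ α in atTop, liminf (fun ε => Mae α ε) (nhdsWithin (0:ℝ) (Set.Ioi 0))
      ≤ Bu + Bv := by
    filter_upwards [eventually_gt_atTop (0:ℝ)] with α hα
    refine Filter.liminf_le_of_frequently_le ?_ (hbdMae α hα)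
    refine Filter.Eventually.frequently ?_
    filter_upwards [self_mem_nhdsWithin] with ε hε
    exact hup α ε hα hε
  have hcoF : IsCoboundedUnder (· ≥ ·) atTop
      (fun α => liminf (fun ε => Mae α ε) (nhdsWithin (0:ℝ) (Set.Ioi 0))) :=
    Filter.IsBoundedUnder.isCoboundedUnder_ge ⟨Bu + Bv, by rwa [Filter.eventually_map]⟩
  have key : ∀ δ : ℝ, 0 < δ → M' - 2*δ ≤
      liminf (fun α => liminf (fun ε => Mae α ε) (nhdsWithin 0 (Set.Ioi 0))) atTop := by
    intro δ hδ
    refine Filter.le_liminf_of_le hcoF ?_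
    filter_upwards [eventually_gt_atTop (0:ℝ)] with α hα
    exact inner δ hδ α hα
  refine le_of_forall_pos_le_add fun ε hε => ?_
  have := key (ε/2) (by linarith)
  linarith
end
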